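/- Let N ≥ K ≥ 1, let λ_1 ≥ λ_2 ≥ ⋯ ≥ λ_N ≥ 0, let q_1 ≥ q_2 ≥ ⋯ ≥ q_K ≥ 0, and let σ² > 0. Then for every injective map s from {1, …, K} to {1, …, N}, ∏_{j=1}^K (1 + λ_{s(j)}²·q_j/σ²) ≤ ∏_{j=1}^K (1 + λ_j²·q_j/σ²). That is, selecting the K largest values λ_1, …, λ_K (in matching sorted order with q) maximizes the product over all selections of K distinct indices. -/
import Mathlib

open Finset

lemma bhps_aux : ∀ (K : ℕ) (lam q : ℕ → ℝ), (∀ i j, i ≤ j → lam j ≤ lam i) →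
    (∀ i, 0 ≤ lam i) → (∀ i j, i ≤ j → q j ≤ q i) → (∀ i, 0 ≤ q i) →
    ∀ s : ℕ → ℕ, Set.InjOn s (Finset.range K) →
    ∏ j ∈ Finset.range K, (1 + (lam (s j))^2 * q j) ≤
      ∏ j ∈ Finset.range K, (1 + (lam j)^2 * q j) := by
  intro K
  induction K with
  | zero => simp
  | succ K ih =>
    intro lam q hl hl0 hq hq0 s hs
    -- nonnegativity of factors
    have hfac : ∀ (t : ℕ → ℕ) (j : ℕ), (0:ℝ) ≤ 1 + (lam (t j))^2 * q j := by
      intro t j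
      have := mul_nonneg (sq_nonneg (lam (t j))) (hq0 j)
      linarith
    obtain ⟨j1, hj1mem, hj1max⟩ := Finset.exists_max_image (Finset.range (K+1)) s ⟨0, by simp⟩
    have hj1K : j1 ≤ K := Nat.lt_succ_iff.mp (Finset.mem_range.mp hj1mem)
    have hKmem : K ∈ Finset.range (K+1) := by simp
    -- the maximum value is at least K
    have hmaxK : K ≤ s j1 := by
      have himg : (Finset.range (K+1)).image s ⊆ Finset.range (s j1 + 1) := by
        intro x hx
        obtain ⟨a, ha, rfl⟩ := Finset.mem_image.mp hx
        exact Finset.mem_range.mpr (Nat.lt_succ_of_le (hj1max a ha))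
      have hcard : ((Finset.range (K+1)).image s).card = K + 1 := by
        rw [Finset.card_image_of_injOn hs, Finset.card_range]
      have := Finset.card_le_card himg
      rw [hcard, Finset.card_range] at this
      omega
    by_cases hcase : j1 = K
    · -- no swap needed
      have hmaxK' : K ≤ s K := hcase ▸ hmaxK
      rw [Finset.prod_range_succ, Finset.prod_range_succ]
      have h1 : ∏ j ∈ Finset.range K, (1 + (lam (s j))^2 * q j) ≤
          ∏ j ∈ Finset.range K, (1 + (lam j)^2 * q j) := by
        apply ih lam q hl hl0 hq hq0 s
        exact hs.mono (by intro x hx; simp at hx ⊢; omega)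
      have h2 : 1 + (lam (s K))^2 * q K ≤ 1 + (lam K)^2 * q K := by
        have hle : lam (s K) ≤ lam K := hl K (s K) hmaxK'
        have := mul_le_mul_of_nonneg_right (pow_le_pow_left₀ (hl0 _) hle 2) (hq0 K)
        linarith
      exact mul_le_mul h1 h2 (hfac s K) (Finset.prod_nonneg fun j _ => by
        have := mul_nonneg (sq_nonneg (lam j)) (hq0 j); linarith)
    · have hj1lt : j1 < K := lt_of_le_of_ne hj1K hcase
      set s' : ℕ → ℕ := s ∘ (Equiv.swap j1 K) with hs'def
      -- Step A : swapping increases the product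
      have hswapj1 : s' j1 = s K := by simp [hs'def, Equiv.swap_apply_left]
      have hswapK : s' K = s j1 := by simp [hs'def, Equiv.swap_apply_right]
      have hstepA : ∏ j ∈ Finset.range (K+1), (1 + (lam (s j))^2 * q j) ≤
          ∏ j ∈ Finset.range (K+1), (1 + (lam (s' j))^2 * q j) := by
        have hKmem' : K ∈ (Finset.range (K+1)).erase j1 :=
          Finset.mem_erase.mpr ⟨Ne.symm hcase, hKmem⟩
        rw [← Finset.mul_prod_erase _ _ hj1mem, ← Finset.mul_prod_erase _ _ hKmem',
            ← Finset.mul_prod_erase _ (fun j => 1 + (lam (s' j))^2 * q j) hj1mem,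
            ← Finset.mul_prod_erase _ _ hKmem']
        have hcongr : ∏ j ∈ ((Finset.range (K+1)).erase j1).erase K,
            (1 + (lam (s' j))^2 * q j) =
            ∏ j ∈ ((Finset.range (K+1)).erase j1).erase K,
            (1 + (lam (s j))^2 * q j) := by
          apply Finset.prod_congr rfl
          intro j hj
          have hj1 : j ≠ K := (Finset.mem_erase.mp hj).1
          have hj2 : j ≠ j1 := (Finset.mem_erase.mp (Finset.mem_erase.mp hj).2).1
          simp [hs'def, Equiv.swap_apply_of_ne_of_ne hj2 hj1]
        rw [hcongr, ← mul_assoc, ← mul_assoc]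
        apply mul_le_mul_of_nonneg_right _ (Finset.prod_nonneg fun j _ => hfac s j)
        rw [hswapj1, hswapK]
        -- (1 + a q j1)(1 + b q K) ≤ (1 + b q j1)(1 + a q K) with a ≤ b, q K ≤ q j1
        have hab : (lam (s j1))^2 ≤ (lam (s K))^2 :=
          pow_le_pow_left₀ (hl0 _) (hl (s K) (s j1) (hj1max K hKmem)) 2
        have hqKj1 : q K ≤ q j1 := hq j1 K (le_of_lt hj1lt)
        nlinarith [mul_nonneg (sub_nonneg.2 hab) (sub_nonneg.2 hqKj1),
          sq_nonneg (lam (s j1)), sq_nonneg (lam (s K)), hq0 j1, hq0 K]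
      -- Step B
      have hs'inj : Set.InjOn s' (Finset.range (K+1)) := by
        intro x hx y hy hxy
        have hmemx : (Equiv.swap j1 K) x ∈ (Finset.range (K+1) : Set ℕ) := by
          simp only [Finset.coe_range, Set.mem_Iio] at hx ⊢
          by_cases h1 : x = j1
          · simp only [h1, Equiv.swap_apply_left]; omega
          · by_cases h2 : x = K
            · simp only [h2, Equiv.swap_apply_right]; omega
            · simp only [Equiv.swap_apply_of_ne_of_ne h1 h2]; omega
        have hmemy : (Equiv.swap j1 K) y ∈ (Finset.range (K+1) : Set ℕ) := by
          simp only [Finset.coe_range, Set.mem_Iio] at hy ⊢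
          by_cases h1 : y = j1
          · simp only [h1, Equiv.swap_apply_left]; omega
          · by_cases h2 : y = K
            · simp only [h2, Equiv.swap_apply_right]; omega
            · simp only [Equiv.swap_apply_of_ne_of_ne h1 h2]; omega
        exact (Equiv.swap j1 K).injective (hs hmemx hmemy hxy)
      rw [Finset.prod_range_succ, Finset.prod_range_succ] at *
      refine le_trans hstepA (mul_le_mul ?_ ?_ (hfac s' K) (Finset.prod_nonneg fun j _ => by
        have := mul_nonneg (sq_nonneg (lam j)) (hq0 j); linarith))
      · apply ih lam q hl hl0 hq hq0 s'
        exact hs'inj.mono (by intro x hx; simp at hx ⊢; omega)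
      · have hle : lam (s' K) ≤ lam K := hl K (s' K) (hswapK ▸ hmaxK)
        have := mul_le_mul_of_nonneg_right (pow_le_pow_left₀ (hl0 _) hle 2) (hq0 K)
        linarith

/-- Optimality of selecting the `K` largest singular values: for sorted
`λ₁ ≥ ⋯ ≥ λ_N ≥ 0` and `q₁ ≥ ⋯ ≥ q_K ≥ 0`, any injective selection `s` of `K`
indices satisfies `∏ⱼ (1 + λ_{s(j)}² qⱼ/σ²) ≤ ∏ⱼ (1 + λⱼ² qⱼ/σ²)`. -/
theorem bhps_largest_singular_values_optimal (N K : ℕ) (hK : 1 ≤ K) (hKN : K ≤ N)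
    (lam : Fin N → ℝ) (hlam_sorted : ∀ i j : Fin N, i ≤ j → lam j ≤ lam i)
    (hlam_nonneg : ∀ i, 0 ≤ lam i)
    (q : Fin K → ℝ) (hq_sorted : ∀ i j : Fin K, i ≤ j → q j ≤ q i)
    (hq_nonneg : ∀ j, 0 ≤ q j)
    (σ2 : ℝ) (hσ : 0 < σ2)
    (s : Fin K → Fin N) (hs : Function.Injective s) :
    ∏ j, (1 + (lam (s j)) ^ 2 * q j / σ2)
      ≤ ∏ j, (1 + (lam (Fin.castLE hKN j)) ^ 2 * q j / σ2) := by
  classical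
  set lamN : ℕ → ℝ := fun i => if h : i < N then lam ⟨i, h⟩ else 0 with hlamN
  set qN : ℕ → ℝ := fun j => if h : j < K then q ⟨j, h⟩ / σ2 else 0 with hqN
  set sN : ℕ → ℕ := fun j => if h : j < K then (s ⟨j, h⟩ : ℕ) else 0 with hsN
  have hlamN_sorted : ∀ i j, i ≤ j → lamN j ≤ lamN i := by
    intro i j hij
    simp only [hlamN]
    split_ifs with h1 h2 h2
    · exact hlam_sorted ⟨i, h2⟩ ⟨j, h1⟩ hij
    · omega
    · exact hlam_nonneg _
    · exact le_refl 0
  have hlamN_nonneg : ∀ i, 0 ≤ lamN i := by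
    intro i; simp only [hlamN]; split_ifs
    · exact hlam_nonneg _
    · exact le_refl 0
  have hqN_sorted : ∀ i j, i ≤ j → qN j ≤ qN i := by
    intro i j hij
    simp only [hqN]
    split_ifs with h1 h2 h2
    · have := hq_sorted ⟨i, h2⟩ ⟨j, h1⟩ hij
      exact div_le_div_of_nonneg_right this hσ.le
    · omega
    · exact div_nonneg (hq_nonneg _) hσ.le
    · exact le_refl 0
  have hqN_nonneg : ∀ j, 0 ≤ qN j := by
    intro j; simp only [hqN]; split_ifs
    · exact div_nonneg (hq_nonneg _) hσ.le
    · exact le_refl 0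
  have hsN_inj : Set.InjOn sN (Finset.range K) := by
    intro x hx y hy h
    simp only [Finset.coe_range, Set.mem_Iio] at hx hy
    simp only [hsN, dif_pos hx, dif_pos hy] at h
    have : s ⟨x, hx⟩ = s ⟨y, hy⟩ := Fin.val_injective h
    exact congrArg Fin.val (hs this)
  have key := bhps_aux K lamN qN hlamN_sorted hlamN_nonneg hqN_sorted hqN_nonneg sN hsN_inj
  have hL : ∏ j ∈ Finset.range K, (1 + (lamN (sN j))^2 * qN j)
      = ∏ j : Fin K, (1 + (lam (s j)) ^ 2 * q j / σ2) := by
    rw [← Fin.prod_univ_eq_prod_range]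
    apply Finset.prod_congr rfl
    intro j _
    simp only [hsN, hqN, hlamN, dif_pos j.isLt, Fin.eta, dif_pos (s j).isLt]
    ring
  have hR : ∏ j ∈ Finset.range K, (1 + (lamN j)^2 * qN j)
      = ∏ j : Fin K, (1 + (lam (Fin.castLE hKN j)) ^ 2 * q j / σ2) := by
    rw [← Fin.prod_univ_eq_prod_range]
    apply Finset.prod_congr rfl
    intro j _
    have hjN : (j : ℕ) < N := lt_of_lt_of_le j.isLt hKN
    simp only [hqN, hlamN, dif_pos j.isLt, Fin.eta, dif_pos hjN]
    have : lam ⟨(j : ℕ), hjN⟩ = lam (Fin.castLE hKN j) := rfl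
    rw [this]; ring
  rw [hL, hR] at key
  exact key
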